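/- Let aᵢ, bᵢ : ℝ → ℂ (i = 1,2,3) be continuous on [0,1]. For each i define hᵢ : ℝ → ℂ on [0,4] by hᵢ(t) = aᵢ(t) for t ∈ [0,1], hᵢ(t) = bᵢ(t−1) for t ∈ (1,2], hᵢ(t) = −aᵢ(3−t) for t ∈ (2,3], hᵢ(t) = −bᵢ(4−t) for t ∈ (3,4]. Write Aᵢ = ∫_0^1 aᵢ, Bᵢ = ∫_0^1 bᵢ, I_α(i,j) = ∫_{0 ≤ s ≤ t ≤ 1} aᵢ(s)aⱼ(t) ds dt and I_β(i,j) = ∫_{0 ≤ s ≤ t ≤ 1} bᵢ(s)bⱼ(t) ds dt. Then ∫_{0 ≤ t₁ ≤ t₂ ≤ t₃ ≤ 4} h₁(t₁)h₂(t₂)h₃(t₃) dt₁dt₂dt₃ = I_α(1,2)B₃ − I_β(1,2)A₃ + I_α(3,2)B₁ − I_β(3,2)A₁ − A₁B₂A₃ + B₁A₂B₃. -/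

import Mathlib

/-!
Collect the iterated integrals of the consecutive subwords of `ω₁ω₂ω₃` along a path into an
upper unitriangular `4 × 4` matrix. By Chen's identity this matrix is multiplicative under
concatenation of paths; it is unchanged by translating the parameter and is inverted by reversing
the path. So the matrix of `[α, β]` is the group commutator of the matrices of `α` and `β`, and its
corner entry is a polynomial in their entries in which the triple integrals along `α` and `β`
cancel. The shuffle relation `∫ ω₃ω₂ = ∫ ω₂ ∫ ω₃ - ∫ ω₂ω₃` then gives the stated form.
-/

open MeasureTheory Set intervalIntegral
open scoped Interval

section IteratedIntegral

variable {𝕜 : Type*} [RCLike 𝕜] {f g k : ℝ → 𝕜} {p q r : ℝ}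

noncomputable def iteratedIntegral₂ (f g : ℝ → 𝕜) (p q : ℝ) : 𝕜 :=
  ∫ t in p..q, ∫ s in p..t, f s * g t

noncomputable def iteratedIntegral₃ (f g k : ℝ → 𝕜) (p q : ℝ) : 𝕜 :=
  ∫ t₃ in p..q, ∫ t₂ in p..t₃, ∫ t₁ in p..t₂, f t₁ * g t₂ * k t₃

lemma iteratedIntegral₂_eq_integral_primitive_mul (f g : ℝ → 𝕜) (p q : ℝ) :
    iteratedIntegral₂ f g p q = ∫ t in p..q, (∫ s in p..t, f s) * g t := by
  simp only [iteratedIntegral₂, intervalIntegral.integral_mul_const]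

lemma iteratedIntegral₃_eq_integral_iteratedIntegral₂_mul (f g k : ℝ → 𝕜) (p q : ℝ) :
    iteratedIntegral₃ f g k p q = ∫ t in p..q, iteratedIntegral₂ f g p t * k t := by
  simp only [iteratedIntegral₃, iteratedIntegral₂, intervalIntegral.integral_mul_const]

lemma intervalIntegrable_primitive_mul (hf : IntervalIntegrable f volume p q)
    (hg : IntervalIntegrable g volume p q) :
    IntervalIntegrable (fun t => (∫ s in p..t, f s) * g t) volume p q :=
  hg.continuousOn_mul (continuousOn_primitive_interval' hf left_mem_uIcc)

lemma continuousOn_iteratedIntegral₂ (hf : IntervalIntegrable f volume p q)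
    (hg : IntervalIntegrable g volume p q) :
    ContinuousOn (iteratedIntegral₂ f g p) (uIcc p q) := by
  simp only [funext (iteratedIntegral₂_eq_integral_primitive_mul f g p)]
  exact continuousOn_primitive_interval' (intervalIntegrable_primitive_mul hf hg) left_mem_uIcc

lemma intervalIntegrable_iteratedIntegral₂_mul (hf : IntervalIntegrable f volume p q)
    (hg : IntervalIntegrable g volume p q) (hk : IntervalIntegrable k volume p q) :
    IntervalIntegrable (fun t => iteratedIntegral₂ f g p t * k t) volume p q :=
  hk.continuousOn_mul (continuousOn_iteratedIntegral₂ hf hg)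

lemma integral_add_adjacent_intervals_of_mem_uIcc (hf₁ : IntervalIntegrable f volume p r)
    (hf₂ : IntervalIntegrable f volume r q) {t : ℝ} (ht : t ∈ uIcc r q) :
    (∫ s in p..r, f s) + (∫ s in r..t, f s) = ∫ s in p..t, f s :=
  integral_add_adjacent_intervals hf₁ (hf₂.mono_set (uIcc_subset_uIcc_left ht))

lemma iteratedIntegral₂_add_adjacent (hf₁ : IntervalIntegrable f volume p r)
    (hf₂ : IntervalIntegrable f volume r q) (hg₁ : IntervalIntegrable g volume p r)
    (hg₂ : IntervalIntegrable g volume r q) :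
    iteratedIntegral₂ f g p q = iteratedIntegral₂ f g p r
      + (∫ t in p..r, f t) * (∫ t in r..q, g t) + iteratedIntegral₂ f g r q := by
  have hsplit : ∀ t ∈ uIcc r q, (∫ s in p..t, f s) * g t
      = (∫ s in p..r, f s) * g t + (∫ s in r..t, f s) * g t := fun t ht => by
    rw [← integral_add_adjacent_intervals_of_mem_uIcc hf₁ hf₂ ht, add_mul]
  have hint : IntervalIntegrable (fun t => (∫ s in p..t, f s) * g t) volume r q :=
    hg₂.continuousOn_mul (((continuousOn_primitive_interval' hf₂ left_mem_uIcc).const_add _).congr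
      fun t ht => (integral_add_adjacent_intervals_of_mem_uIcc hf₁ hf₂ ht).symm)
  rw [iteratedIntegral₂_eq_integral_primitive_mul, iteratedIntegral₂_eq_integral_primitive_mul,
    iteratedIntegral₂_eq_integral_primitive_mul,
    ← integral_add_adjacent_intervals (intervalIntegrable_primitive_mul hf₁ hg₁) hint,
    integral_congr hsplit,
    integral_add (hg₂.const_mul _) (intervalIntegrable_primitive_mul hf₂ hg₂),
    intervalIntegral.integral_const_mul, add_assoc]

lemma iteratedIntegral₃_add_adjacent (hf₁ : IntervalIntegrable f volume p r)
    (hf₂ : IntervalIntegrable f volume r q) (hg₁ : IntervalIntegrable g volume p r)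
    (hg₂ : IntervalIntegrable g volume r q) (hk₁ : IntervalIntegrable k volume p r)
    (hk₂ : IntervalIntegrable k volume r q) :
    iteratedIntegral₃ f g k p q = iteratedIntegral₃ f g k p r
      + iteratedIntegral₂ f g p r * (∫ t in r..q, k t)
      + (∫ t in p..r, f t) * iteratedIntegral₂ g k r q + iteratedIntegral₃ f g k r q := by
  have hchen : ∀ t ∈ uIcc r q, iteratedIntegral₂ f g p t = iteratedIntegral₂ f g p r
      + (∫ s in p..r, f s) * (∫ s in r..t, g s) + iteratedIntegral₂ f g r t := fun t ht => by
    have hsub : uIcc r t ⊆ uIcc r q := uIcc_subset_uIcc_left ht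
    exact iteratedIntegral₂_add_adjacent hf₁ (hf₂.mono_set hsub) hg₁ (hg₂.mono_set hsub)
  have hsplit : ∀ t ∈ uIcc r q, iteratedIntegral₂ f g p t * k t
      = iteratedIntegral₂ f g p r * k t + (∫ s in p..r, f s) * ((∫ s in r..t, g s) * k t)
        + iteratedIntegral₂ f g r t * k t := fun t ht => by
    rw [hchen t ht]
    ring
  have hint : IntervalIntegrable (fun t => iteratedIntegral₂ f g p t * k t) volume r q :=
    hk₂.continuousOn_mul (ContinuousOn.congr ((continuousOn_const.add (continuousOn_const.mul
      (continuousOn_primitive_interval' hg₂ left_mem_uIcc))).add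
      (continuousOn_iteratedIntegral₂ hf₂ hg₂)) hchen)
  rw [iteratedIntegral₃_eq_integral_iteratedIntegral₂_mul,
    iteratedIntegral₃_eq_integral_iteratedIntegral₂_mul,
    iteratedIntegral₃_eq_integral_iteratedIntegral₂_mul,
    iteratedIntegral₂_eq_integral_primitive_mul g k,
    ← integral_add_adjacent_intervals (intervalIntegrable_iteratedIntegral₂_mul hf₁ hg₁ hk₁) hint,
    integral_congr hsplit,
    integral_add ((hk₂.const_mul _).add ((intervalIntegrable_primitive_mul hg₂ hk₂).const_mul _))
      (intervalIntegrable_iteratedIntegral₂_mul hf₂ hg₂ hk₂),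
    integral_add (hk₂.const_mul _) ((intervalIntegrable_primitive_mul hg₂ hk₂).const_mul _),
    intervalIntegral.integral_const_mul, intervalIntegral.integral_const_mul]
  ring

lemma iteratedIntegral₂_congr {f' g' : ℝ → 𝕜} (hf : EqOn f f' (Ι p q)) (hg : EqOn g g' (Ι p q)) :
    iteratedIntegral₂ f g p q = iteratedIntegral₂ f' g' p q := by
  refine integral_congr_ae (.of_forall fun t ht => integral_congr_ae (.of_forall fun s hs => ?_))
  have hsub : Ι p t ⊆ Ι p q :=
    uIoc_subset_uIoc_of_uIcc_subset_uIcc (uIcc_subset_uIcc_left (uIoc_subset_uIcc ht))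
  rw [hf (hsub hs), hg ht]

lemma iteratedIntegral₃_congr {f' g' k' : ℝ → 𝕜} (hf : EqOn f f' (Ι p q))
    (hg : EqOn g g' (Ι p q)) (hk : EqOn k k' (Ι p q)) :
    iteratedIntegral₃ f g k p q = iteratedIntegral₃ f' g' k' p q := by
  simp only [iteratedIntegral₃_eq_integral_iteratedIntegral₂_mul]
  refine integral_congr_ae (.of_forall fun t ht => ?_)
  have hsub : Ι p t ⊆ Ι p q :=
    uIoc_subset_uIoc_of_uIcc_subset_uIcc (uIcc_subset_uIcc_left (uIoc_subset_uIcc ht))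
  rw [iteratedIntegral₂_congr (hf.mono hsub) (hg.mono hsub), hk ht]

lemma iteratedIntegral₂_comp_sub_right (f g : ℝ → 𝕜) (c p q : ℝ) :
    iteratedIntegral₂ (fun t => f (t - c)) (fun t => g (t - c)) p q
      = iteratedIntegral₂ f g (p - c) (q - c) := by
  simp only [iteratedIntegral₂_eq_integral_primitive_mul]
  rw [← integral_comp_sub_right _ c]
  simp only [integral_comp_sub_right (fun s => f s)]

lemma iteratedIntegral₃_comp_sub_right (f g k : ℝ → 𝕜) (c p q : ℝ) :
    iteratedIntegral₃ (fun t => f (t - c)) (fun t => g (t - c)) (fun t => k (t - c)) p q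
      = iteratedIntegral₃ f g k (p - c) (q - c) := by
  simp only [iteratedIntegral₃_eq_integral_iteratedIntegral₂_mul, iteratedIntegral₂_comp_sub_right]
  rw [← integral_comp_sub_right _ c]

lemma iteratedIntegral₂_reverse (c : ℝ) (hf : IntervalIntegrable f volume (c - q) (c - p))
    (hg : IntervalIntegrable g volume (c - q) (c - p)) :
    iteratedIntegral₂ (fun t => -f (c - t)) (fun t => -g (c - t)) p q
      = (∫ t in c - q..c - p, f t) * (∫ t in c - q..c - p, g t)
        - iteratedIntegral₂ f g (c - q) (c - p) := by
  have hinner : ∀ t, ∫ s in p..t, -f (c - s) * -g (c - t)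
      = (∫ s in c - t..c - p, f s) * g (c - t) := fun t => by
    simp only [neg_mul_neg, intervalIntegral.integral_mul_const,
      integral_comp_sub_left (fun s => f s)]
  have htail : ∀ u ∈ uIcc (c - q) (c - p), (∫ s in u..c - p, f s) * g u
      = (∫ s in c - q..c - p, f s) * g u - (∫ s in c - q..u, f s) * g u := fun u hu => by
    rw [← sub_mul, integral_interval_sub_left hf (hf.mono_set (uIcc_subset_uIcc_left hu))]
  rw [iteratedIntegral₂, iteratedIntegral₂_eq_integral_primitive_mul]
  simp only [hinner]
  rw [integral_comp_sub_left (fun u => (∫ s in u..c - p, f s) * g u),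
    integral_congr htail, integral_sub (hg.const_mul _) (intervalIntegrable_primitive_mul hf hg),
    intervalIntegral.integral_const_mul]

lemma iteratedIntegral₃_reverse (c : ℝ) (hf : IntervalIntegrable f volume (c - q) (c - p))
    (hg : IntervalIntegrable g volume (c - q) (c - p))
    (hk : IntervalIntegrable k volume (c - q) (c - p)) :
    iteratedIntegral₃ (fun t => -f (c - t)) (fun t => -g (c - t)) (fun t => -k (c - t)) p q
      = iteratedIntegral₂ f g (c - q) (c - p) * (∫ t in c - q..c - p, k t)
        + (∫ t in c - q..c - p, f t) * iteratedIntegral₂ g k (c - q) (c - p)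
        - (∫ t in c - q..c - p, f t) * (∫ t in c - q..c - p, g t) * (∫ t in c - q..c - p, k t)
        - iteratedIntegral₃ f g k (c - q) (c - p) := by
  have hinner : ∀ t ∈ uIcc p q, iteratedIntegral₂ (fun t => -f (c - t)) (fun t => -g (c - t)) p t
      * -k (c - t) = -(((∫ s in c - t..c - p, f s) * (∫ s in c - t..c - p, g s)
        - iteratedIntegral₂ f g (c - t) (c - p)) * k (c - t)) := fun t ht => by
    have hmem : c - t ∈ uIcc (c - q) (c - p) := by
      rw [uIcc_comm, ← image_const_sub_uIcc]
      exact mem_image_of_mem _ ht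
    have hsub := uIcc_subset_uIcc_right hmem
    rw [iteratedIntegral₂_reverse c (hf.mono_set hsub) (hg.mono_set hsub), mul_neg]
  have htail : ∀ u ∈ uIcc (c - q) (c - p), ((∫ s in u..c - p, f s) * (∫ s in u..c - p, g s)
      - iteratedIntegral₂ f g u (c - p)) * k u
      = ((∫ s in c - q..c - p, f s) * (∫ s in c - q..c - p, g s)
          - iteratedIntegral₂ f g (c - q) (c - p)) * k u
        - (∫ s in c - q..c - p, f s) * ((∫ s in c - q..u, g s) * k u)
        + iteratedIntegral₂ f g (c - q) u * k u := fun u hu => by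
    have hsub := uIcc_subset_uIcc_left hu
    have hsub' := uIcc_subset_uIcc_right hu
    rw [iteratedIntegral₂_add_adjacent (hf.mono_set hsub) (hf.mono_set hsub') (hg.mono_set hsub)
        (hg.mono_set hsub'), ← integral_interval_sub_left hf (hf.mono_set hsub),
      ← integral_interval_sub_left hg (hg.mono_set hsub)]
    ring
  rw [iteratedIntegral₃_eq_integral_iteratedIntegral₂_mul, integral_congr hinner,
    intervalIntegral.integral_neg,
    integral_comp_sub_left (fun u => ((∫ s in u..c - p, f s)
      * (∫ s in u..c - p, g s) - iteratedIntegral₂ f g u (c - p)) * k u),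
    integral_congr htail,
    integral_add ((hk.const_mul _).sub ((intervalIntegrable_primitive_mul hg hk).const_mul _))
      (intervalIntegrable_iteratedIntegral₂_mul hf hg hk),
    integral_sub (hk.const_mul _) ((intervalIntegrable_primitive_mul hg hk).const_mul _),
    intervalIntegral.integral_const_mul, intervalIntegral.integral_const_mul,
    ← iteratedIntegral₂_eq_integral_primitive_mul,
    ← iteratedIntegral₃_eq_integral_iteratedIntegral₂_mul]
  ring

lemma hasDerivAt_primitive_of_continuousOn (hf : ContinuousOn f (uIcc p q)) {x : ℝ}
    (hx : x ∈ Ioo (min p q) (max p q)) : HasDerivAt (fun t => ∫ s in p..t, f s) (f x) x := by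
  have hopen : ContinuousOn f (Ioo (min p q) (max p q)) := hf.mono Ioo_subset_Icc_self
  exact integral_hasDerivAt_right
    (hf.mono (uIcc_subset_uIcc_left (Ioo_subset_Icc_self hx))).intervalIntegrable
    (hopen.stronglyMeasurableAtFilter isOpen_Ioo x hx) (hopen.continuousAt (isOpen_Ioo.mem_nhds hx))

lemma iteratedIntegral₂_add_iteratedIntegral₂_swap (hf : ContinuousOn f (uIcc p q))
    (hg : ContinuousOn g (uIcc p q)) :
    iteratedIntegral₂ f g p q + iteratedIntegral₂ g f p q
      = (∫ t in p..q, f t) * (∫ t in p..q, g t) := by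
  have hparts := integral_deriv_mul_eq_sub_of_hasDerivAt
    (continuousOn_primitive_interval' hf.intervalIntegrable left_mem_uIcc)
    (continuousOn_primitive_interval' hg.intervalIntegrable left_mem_uIcc)
    (fun x hx => hasDerivAt_primitive_of_continuousOn hf hx)
    (fun x hx => hasDerivAt_primitive_of_continuousOn hg hx)
    hf.intervalIntegrable hg.intervalIntegrable
  rw [integral_add (hf.intervalIntegrable.mul_continuousOn
      (continuousOn_primitive_interval' hg.intervalIntegrable left_mem_uIcc))
      (intervalIntegrable_primitive_mul hf.intervalIntegrable hg.intervalIntegrable)] at hparts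
  simp only [integral_same, mul_zero, sub_zero] at hparts
  rw [iteratedIntegral₂_eq_integral_primitive_mul, iteratedIntegral₂_eq_integral_primitive_mul,
    ← hparts, add_comm]
  simp only [mul_comm (f _)]

end IteratedIntegral

section IteratedIntegralMatrix

variable {𝕜 : Type*} [RCLike 𝕜] {p q r : ℝ}

/-- The truncated signature over `[p, q]` of a path along which three `1`-forms pull back to
`f 0, f 1, f 2`. -/
noncomputable def iteratedIntegralMatrix (f : Fin 3 → ℝ → 𝕜) (p q : ℝ) : Matrix (Fin 4) (Fin 4) 𝕜 :=
  !![1, ∫ t in p..q, f 0 t, iteratedIntegral₂ (f 0) (f 1) p q,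
      iteratedIntegral₃ (f 0) (f 1) (f 2) p q;
    0, 1, ∫ t in p..q, f 1 t, iteratedIntegral₂ (f 1) (f 2) p q;
    0, 0, 1, ∫ t in p..q, f 2 t;
    0, 0, 0, 1]

theorem blockTriangular_iteratedIntegralMatrix (f : Fin 3 → ℝ → 𝕜) (p q : ℝ) :
    (iteratedIntegralMatrix f p q).BlockTriangular id := by
  intro i j hij
  fin_cases i <;> fin_cases j <;> simp_all [iteratedIntegralMatrix]

theorem iteratedIntegralMatrix_apply_self (f : Fin 3 → ℝ → 𝕜) (p q : ℝ) (i : Fin 4) :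
    iteratedIntegralMatrix f p q i i = 1 := by
  fin_cases i <;> rfl

theorem iteratedIntegralMatrix_mul {f : Fin 3 → ℝ → 𝕜}
    (h₁ : ∀ i, IntervalIntegrable (f i) volume p r)
    (h₂ : ∀ i, IntervalIntegrable (f i) volume r q) :
    iteratedIntegralMatrix f p r * iteratedIntegralMatrix f r q = iteratedIntegralMatrix f p q := by
  ext i j
  fin_cases i <;> fin_cases j <;>
    simp only [iteratedIntegralMatrix, Matrix.mul_apply, Fin.sum_univ_four,
      Matrix.of_apply, Matrix.cons_val', Matrix.cons_val, Matrix.cons_val_zero, Matrix.cons_val_one,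
      Matrix.cons_val_fin_one, Fin.isValue, Fin.reduceFinMk, Fin.zero_eta, Fin.mk_one,
      ← integral_add_adjacent_intervals (h₁ _) (h₂ _),
      iteratedIntegral₂_add_adjacent (h₁ _) (h₂ _) (h₁ _) (h₂ _),
      iteratedIntegral₃_add_adjacent (h₁ 0) (h₂ 0) (h₁ 1) (h₂ 1) (h₁ 2) (h₂ 2)] <;> ring

theorem iteratedIntegralMatrix_congr {f g : Fin 3 → ℝ → 𝕜} (h : ∀ i, EqOn (f i) (g i) (Ι p q)) :
    iteratedIntegralMatrix f p q = iteratedIntegralMatrix g p q := by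
  simp only [iteratedIntegralMatrix, integral_congr_ae (.of_forall (h _)),
    iteratedIntegral₂_congr (h _) (h _), iteratedIntegral₃_congr (h 0) (h 1) (h 2)]

theorem iteratedIntegralMatrix_comp_sub_right (f : Fin 3 → ℝ → 𝕜) (c p q : ℝ) :
    iteratedIntegralMatrix (fun i t => f i (t - c)) p q
      = iteratedIntegralMatrix f (p - c) (q - c) := by
  simp only [iteratedIntegralMatrix, integral_comp_sub_right (f _),
    iteratedIntegral₂_comp_sub_right, iteratedIntegral₃_comp_sub_right]

theorem iteratedIntegralMatrix_reverse_mul {f : Fin 3 → ℝ → 𝕜} (c : ℝ)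
    (hf : ∀ i, IntervalIntegrable (f i) volume (c - q) (c - p)) :
    iteratedIntegralMatrix (fun i t => -f i (c - t)) p q * iteratedIntegralMatrix f (c - q) (c - p)
      = 1 := by
  ext i j
  fin_cases i <;> fin_cases j <;>
    simp only [iteratedIntegralMatrix, Matrix.mul_apply, Fin.sum_univ_four,
      Matrix.of_apply, Matrix.cons_val', Matrix.cons_val, Matrix.cons_val_zero, Matrix.cons_val_one,
      Matrix.cons_val_fin_one, Fin.isValue, Fin.reduceFinMk, Fin.zero_eta, Fin.mk_one,
      Matrix.one_apply, Fin.reduceEq, ↓reduceIte, intervalIntegral.integral_neg,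
      integral_comp_sub_left, iteratedIntegral₂_reverse c (hf _) (hf _),
      iteratedIntegral₃_reverse c (hf 0) (hf 1) (hf 2)] <;> ring

theorem iteratedIntegralMatrix_commutator_mul {a b h : Fin 3 → ℝ → 𝕜}
    (ha : ∀ i, IntervalIntegrable (a i) volume 0 1) (hb : ∀ i, IntervalIntegrable (b i) volume 0 1)
    (h₁ : ∀ i, EqOn (h i) (a i) (Ι 0 1)) (h₂ : ∀ i, EqOn (h i) (fun t => b i (t - 1)) (Ι 1 2))
    (h₃ : ∀ i, EqOn (h i) (fun t => -a i (3 - t)) (Ι 2 3))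
    (h₄ : ∀ i, EqOn (h i) (fun t => -b i (4 - t)) (Ι 3 4)) :
    iteratedIntegralMatrix h 0 4 * iteratedIntegralMatrix b 0 1 * iteratedIntegralMatrix a 0 1
      = iteratedIntegralMatrix a 0 1 * iteratedIntegralMatrix b 0 1 := by
  have hh₁ : ∀ i, IntervalIntegrable (h i) volume 0 1 := fun i => (ha i).congr (h₁ i).symm
  have hh₂ : ∀ i, IntervalIntegrable (h i) volume 1 2 := fun i => by
    have hb₂ := (hb i).comp_sub_right 1
    norm_num at hb₂
    exact hb₂.congr (h₂ i).symm
  have hh₃ : ∀ i, IntervalIntegrable (h i) volume 2 3 := fun i => by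
    have ha₃ := ((ha i).comp_sub_left 3).symm.neg
    norm_num at ha₃
    exact ha₃.congr (h₃ i).symm
  have hh₄ : ∀ i, IntervalIntegrable (h i) volume 3 4 := fun i => by
    have hb₄ := ((hb i).comp_sub_left 4).symm.neg
    norm_num at hb₄
    exact hb₄.congr (h₄ i).symm
  have hsplit : iteratedIntegralMatrix h 0 4
      = iteratedIntegralMatrix a 0 1 * iteratedIntegralMatrix b 0 1
        * iteratedIntegralMatrix (fun i t => -a i (3 - t)) 2 3
        * iteratedIntegralMatrix (fun i t => -b i (4 - t)) 3 4 := by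
    rw [← iteratedIntegralMatrix_mul (fun i => ((hh₁ i).trans (hh₂ i)).trans (hh₃ i)) hh₄,
      ← iteratedIntegralMatrix_mul (fun i => (hh₁ i).trans (hh₂ i)) hh₃,
      ← iteratedIntegralMatrix_mul hh₁ hh₂, iteratedIntegralMatrix_congr h₁,
      iteratedIntegralMatrix_congr h₂, iteratedIntegralMatrix_comp_sub_right,
      iteratedIntegralMatrix_congr h₃, iteratedIntegralMatrix_congr h₄]
    norm_num
  have hrev_a : iteratedIntegralMatrix (fun i t => -a i (3 - t)) 2 3
      * iteratedIntegralMatrix a 0 1 = 1 := by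
    convert iteratedIntegralMatrix_reverse_mul (f := a) (p := 2) (q := 3) 3 ?_ using 3 <;>
      norm_num [ha]
  have hrev_b : iteratedIntegralMatrix (fun i t => -b i (4 - t)) 3 4
      * iteratedIntegralMatrix b 0 1 = 1 := by
    convert iteratedIntegralMatrix_reverse_mul (f := b) (p := 3) (q := 4) 4 ?_ using 3 <;>
      norm_num [hb]
  rw [hsplit, mul_assoc _ (iteratedIntegralMatrix _ 3 4), hrev_b, mul_one, mul_assoc, hrev_a,
    mul_one]

end IteratedIntegralMatrix

/-- `C * Y * X = X * Y` says that `C` is the commutator `X * Y * X⁻¹ * Y⁻¹`. -/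
theorem unitriangular_apply_zero_three_of_mul_mul_eq_mul {R : Type*} [CommRing R]
    {C X Y : Matrix (Fin 4) (Fin 4) R} (hX : X.BlockTriangular id) (hY : Y.BlockTriangular id)
    (hC₁ : C 0 0 = 1) (hX₁ : ∀ i, X i i = 1) (hY₁ : ∀ i, Y i i = 1) (h : C * Y * X = X * Y) :
    C 0 3 = X 0 2 * Y 2 3 - Y 0 2 * X 2 3 + X 0 1 * Y 1 3 - Y 0 1 * X 1 3
      - (X 0 1 * Y 1 2 - Y 0 1 * X 1 2) * (X 2 3 + Y 2 3) := by
  have hX₀ : ∀ i j : Fin 4, j < i → X i j = 0 := fun i j hij => hX hij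
  have hY₀ : ∀ i j : Fin 4, j < i → Y i j = 0 := fun i j hij => hY hij
  have e : ∀ j, (C * Y * X) 0 j = (X * Y) 0 j := fun j => by rw [h]
  have e₁ := e 1
  have e₂ := e 2
  have e₃ := e 3
  simp only [Matrix.mul_apply, Fin.sum_univ_four, hC₁, hX₁, hY₁, hX₀, hY₀, Fin.isValue,
    Fin.reduceLT, zero_lt_one, mul_zero, add_zero] at e₁ e₂ e₃
  linear_combination e₃ - (X 2 3 + Y 2 3) * e₂
    + ((X 2 3 + Y 2 3) * (X 1 2 + Y 1 2) - X 1 3 - Y 1 3 - Y 1 2 * X 2 3) * e₁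

/-- Lemma 5.7(c)/3.26(c): the triple iterated integral over the commutator loop
`[α,β] = αβα⁻¹β⁻¹`.  Here `a i`, `b i` are the pullbacks of `ωᵢ` along `α`, `β`,
and `h i` is the pullback along `[α,β]`, given piecewise on `[0,4]`. -/
theorem triple_iterated_integral_over_commutator
    (a b h : Fin 3 → ℝ → ℂ)
    (ha : ∀ i, ContinuousOn (a i) (Set.Icc 0 1))
    (hb : ∀ i, ContinuousOn (b i) (Set.Icc 0 1))
    (h1 : ∀ i, ∀ t ∈ Set.Icc (0:ℝ) 1, h i t = a i t)
    (h2 : ∀ i, ∀ t ∈ Set.Ioc (1:ℝ) 2, h i t = b i (t - 1))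
    (h3 : ∀ i, ∀ t ∈ Set.Ioc (2:ℝ) 3, h i t = -a i (3 - t))
    (h4 : ∀ i, ∀ t ∈ Set.Ioc (3:ℝ) 4, h i t = -b i (4 - t)) :
    (∫ t₃ in (0:ℝ)..4, ∫ t₂ in (0:ℝ)..t₃, ∫ t₁ in (0:ℝ)..t₂, h 0 t₁ * h 1 t₂ * h 2 t₃)
      = (∫ t in (0:ℝ)..1, ∫ s in (0:ℝ)..t, a 0 s * a 1 t) * (∫ t in (0:ℝ)..1, b 2 t)
        - (∫ t in (0:ℝ)..1, ∫ s in (0:ℝ)..t, b 0 s * b 1 t) * (∫ t in (0:ℝ)..1, a 2 t)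
        + (∫ t in (0:ℝ)..1, ∫ s in (0:ℝ)..t, a 2 s * a 1 t) * (∫ t in (0:ℝ)..1, b 0 t)
        - (∫ t in (0:ℝ)..1, ∫ s in (0:ℝ)..t, b 2 s * b 1 t) * (∫ t in (0:ℝ)..1, a 0 t)
        - (∫ t in (0:ℝ)..1, a 0 t) * (∫ t in (0:ℝ)..1, b 1 t) * (∫ t in (0:ℝ)..1, a 2 t)
        + (∫ t in (0:ℝ)..1, b 0 t) * (∫ t in (0:ℝ)..1, a 1 t) * (∫ t in (0:ℝ)..1, b 2 t) := by
  rw [← uIcc_of_le zero_le_one] at ha hb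
  have hcomm := iteratedIntegralMatrix_commutator_mul (fun i => (ha i).intervalIntegrable)
    (fun i => (hb i).intervalIntegrable)
    (fun i t ht => h1 i t (Ioc_subset_Icc_self (by simpa using ht)))
    (fun i t ht => h2 i t (by simpa [one_le_two] using ht))
    (fun i t ht => h3 i t (by simpa [uIoc_of_le (show (2:ℝ) ≤ 3 by norm_num)] using ht))
    (fun i t ht => h4 i t (by simpa [uIoc_of_le (show (3:ℝ) ≤ 4 by norm_num)] using ht))
  have hcorner := unitriangular_apply_zero_three_of_mul_mul_eq_mul
    (blockTriangular_iteratedIntegralMatrix a 0 1) (blockTriangular_iteratedIntegralMatrix b 0 1)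
    (iteratedIntegralMatrix_apply_self h 0 4 0) (iteratedIntegralMatrix_apply_self a 0 1)
    (iteratedIntegralMatrix_apply_self b 0 1) hcomm
  have hshuffle_a := iteratedIntegral₂_add_iteratedIntegral₂_swap (ha 1) (ha 2)
  have hshuffle_b := iteratedIntegral₂_add_iteratedIntegral₂_swap (hb 1) (hb 2)
  simp only [iteratedIntegralMatrix, Matrix.of_apply, Matrix.cons_val', Matrix.cons_val,
    Matrix.cons_val_zero, Matrix.cons_val_one, Matrix.cons_val_fin_one, Fin.isValue] at hcorner
  unfold iteratedIntegral₂ iteratedIntegral₃ at hcorner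
  unfold iteratedIntegral₂ at hshuffle_a hshuffle_b
  linear_combination hcorner - (∫ t in (0:ℝ)..1, b 0 t) * hshuffle_a
    + (∫ t in (0:ℝ)..1, a 0 t) * hshuffle_b
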